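/- arXiv:1412.4150 — 7 statements merged into one kernel-verified Lean document; each statement's English description precedes it below -/
import Mathlib

section
/- Let V be a finite-dimensional real normed vector space, Ω ⊆ V an open cone (i.e. c • x ∈ Ω for all c > 0 and x ∈ Ω), f : Ω → V positively homogeneous of degree −3 (f(c • x) = c⁻³ • f(x) for all c > 0 and x ∈ Ω), and h : Ω → ℝ a strictly positive, twice continuously differentiable function that is positively homogeneous of degree 1 (h(c • x) = c · h(x) for all c > 0 and x ∈ Ω). Let q : ℝ → Ω be twice differentiable with q''(t) = f(q(t)) for all t. Set φ(t) = h(q(t)) and q₁(t) = φ(t)⁻¹ • q(t). Then for all t: (i) h(q₁(t)) = 1, and (ii) defining u(t) = φ(t)² • q₁'(t), the function u is differentiable and φ(t)² • u'(t) = f(q₁(t)) − (φ(t)³ · φ''(t)) • q₁(t). -/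
/-!
Writing `q₁ = φ⁻¹ • q`, the rescaled velocity `φ² • q₁'` is the Wronskian-type expression
`φ • q' - φ' • q`, whose derivative is `φ • q'' - φ'' • q` because the cross terms cancel.
Degree `-3` homogeneity of `f` gives `f (q₁) = φ³ • f q = φ³ • q''`, and degree `1` homogeneity
of `h` gives `h (q₁) = φ⁻¹ * h q = 1`.
-/

section Wronskian

variable {E : Type*} [NormedAddCommGroup E] [NormedSpace ℝ E] {φ : ℝ → ℝ} {q : ℝ → E} {t : ℝ}

theorem sq_smul_deriv_inv_smul (hφ : DifferentiableAt ℝ φ t) (hq : DifferentiableAt ℝ q t)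
    (hφt : φ t ≠ 0) :
    φ t ^ 2 • deriv (fun s => (φ s)⁻¹ • q s) t = φ t • deriv q t - deriv φ t • q t := by
  have hderiv : HasDerivAt (fun s => (φ s)⁻¹ • q s) _ t :=
    (hφ.hasDerivAt.inv hφt).smul hq.hasDerivAt
  rw [hderiv.deriv, Pi.inv_apply]
  match_scalars <;> field_simp

theorem hasDerivAt_smul_deriv_sub_deriv_smul (hφ : DifferentiableAt ℝ φ t)
    (hq : DifferentiableAt ℝ q t) (hφ' : DifferentiableAt ℝ (deriv φ) t)
    (hq' : DifferentiableAt ℝ (deriv q) t) :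
    HasDerivAt (fun s => φ s • deriv q s - deriv φ s • q s)
      (φ t • deriv (deriv q) t - deriv (deriv φ) t • q t) t :=
  ((hφ.hasDerivAt.smul hq'.hasDerivAt).sub (hφ'.hasDerivAt.smul hq.hasDerivAt)).congr_deriv
    (by abel)

end Wronskian

theorem ContDiffOn.differentiable_comp_and_deriv_comp {E F : Type*} [NormedAddCommGroup E]
    [NormedSpace ℝ E] [NormedAddCommGroup F] [NormedSpace ℝ F] {h : E → F} {Ω : Set E}
    (hh : ContDiffOn ℝ 2 h Ω) (hΩ : IsOpen Ω) {q : ℝ → E} (hqΩ : ∀ t, q t ∈ Ω)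
    (hq : Differentiable ℝ q) (hq' : Differentiable ℝ (deriv q)) :
    Differentiable ℝ (fun t => h (q t)) ∧ Differentiable ℝ (deriv fun t => h (q t)) := by
  have hhq : ∀ t, ContDiffAt ℝ 2 h (q t) := fun t => hh.contDiffAt (hΩ.mem_nhds (hqΩ t))
  have hderiv : ∀ t, HasDerivAt (fun t => h (q t)) (fderiv ℝ h (q t) (deriv q t)) t := fun t =>
    ((hhq t).differentiableAt two_ne_zero).hasFDerivAt.comp_hasDerivAt t (hq t).hasDerivAt
  refine ⟨fun t => (hderiv t).differentiableAt, ?_⟩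
  rw [funext fun t => (hderiv t).deriv]
  intro t
  have hfderiv : DifferentiableAt ℝ (fderiv ℝ h) (q t) :=
    ((hhq t).fderiv_right one_add_one_eq_two.le).differentiableAt one_ne_zero
  exact (hfderiv.comp t (hq t)).clm_apply (hq' t)

theorem stmt_0_general
    {V : Type*} [NormedAddCommGroup V] [NormedSpace ℝ V]
    (Ω : Set V) (hΩopen : IsOpen Ω)
    (f : V → V)
    (hfhom : ∀ c : ℝ, 0 < c → ∀ x ∈ Ω, f (c • x) = (c ^ 3)⁻¹ • f x)
    (h : V → ℝ)
    (hpos : ∀ x ∈ Ω, 0 < h x)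
    (hC2 : ContDiffOn ℝ 2 h Ω)
    (hhom : ∀ c : ℝ, 0 < c → ∀ x ∈ Ω, h (c • x) = c * h x)
    (q : ℝ → V) (hqΩ : ∀ t, q t ∈ Ω)
    (hq1 : Differentiable ℝ q) (hq2 : Differentiable ℝ (deriv q))
    (heq : ∀ t, deriv (deriv q) t = f (q t))
    (φ : ℝ → ℝ) (hφ : ∀ t, φ t = h (q t))
    (q₁ : ℝ → V) (hq₁ : ∀ t, q₁ t = (φ t)⁻¹ • q t)
    (u : ℝ → V) (hu : ∀ t, u t = (φ t) ^ 2 • deriv q₁ t) :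
    ∀ t : ℝ,
      h (q₁ t) = 1 ∧
      DifferentiableAt ℝ u t ∧
      (φ t) ^ 2 • deriv u t =
        f (q₁ t) - ((φ t) ^ 3 * deriv (deriv φ) t) • q₁ t := by
  have hφpos : ∀ s, 0 < φ s := fun s => hφ s ▸ hpos _ (hqΩ s)
  obtain ⟨hφd, hφ'd⟩ : Differentiable ℝ φ ∧ Differentiable ℝ (deriv φ) := by
    rw [funext hφ]
    exact hC2.differentiable_comp_and_deriv_comp hΩopen hqΩ hq1 hq2
  have hu_eq : u = fun s => φ s • deriv q s - deriv φ s • q s := funext fun s => by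
    rw [hu, funext hq₁, sq_smul_deriv_inv_smul (hφd s) (hq1 s) (hφpos s).ne']
  intro t
  have hu' := hu_eq ▸ hasDerivAt_smul_deriv_sub_deriv_smul (hφd t) (hq1 t) (hφ'd t) (hq2 t)
  have hφinv : 0 < (φ t)⁻¹ := inv_pos.2 (hφpos t)
  refine ⟨?_, hu'.differentiableAt, ?_⟩
  · rw [hq₁, hhom _ hφinv _ (hqΩ t), ← hφ, inv_mul_cancel₀ (hφpos t).ne']
  · rw [hu'.deriv, hq₁, hfhom _ hφinv _ (hqΩ t), inv_pow, inv_inv, ← heq]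
    have := (hφpos t).ne'
    match_scalars <;> field_simp

/-- Central projection of a solution of `q'' = f(q)`, with `f`
positively homogeneous of degree `-3`, onto the screen `{h = 1}`:
setting `φ = h ∘ q` and `q₁ = φ⁻¹ • q`, one has `h(q₁) = 1`, and with
`u = φ² • q₁'` (the derivative in the rescaled time), the function `u` is
differentiable and `φ² • u' = f(q₁) - (φ³ φ'') • q₁`. -/
theorem stmt_0
    {V : Type*} [NormedAddCommGroup V] [NormedSpace ℝ V] [FiniteDimensional ℝ V]
    (Ω : Set V) (hΩopen : IsOpen Ω)
    (hΩcone : ∀ c : ℝ, 0 < c → ∀ x ∈ Ω, c • x ∈ Ω)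
    (f : V → V)
    (hfhom : ∀ c : ℝ, 0 < c → ∀ x ∈ Ω, f (c • x) = (c ^ 3)⁻¹ • f x)
    (h : V → ℝ)
    (hpos : ∀ x ∈ Ω, 0 < h x)
    (hC2 : ContDiffOn ℝ 2 h Ω)
    (hhom : ∀ c : ℝ, 0 < c → ∀ x ∈ Ω, h (c • x) = c * h x)
    (q : ℝ → V) (hqΩ : ∀ t, q t ∈ Ω)
    (hq1 : Differentiable ℝ q) (hq2 : Differentiable ℝ (deriv q))
    (heq : ∀ t, deriv (deriv q) t = f (q t))
    (φ : ℝ → ℝ) (hφ : ∀ t, φ t = h (q t))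
    (q₁ : ℝ → V) (hq₁ : ∀ t, q₁ t = (φ t)⁻¹ • q t)
    (u : ℝ → V) (hu : ∀ t, u t = (φ t) ^ 2 • deriv q₁ t) :
    ∀ t : ℝ,
      h (q₁ t) = 1 ∧
      DifferentiableAt ℝ u t ∧
      (φ t) ^ 2 • deriv u t =
        f (q₁ t) - ((φ t) ^ 3 * deriv (deriv φ) t) • q₁ t :=
  stmt_0_general Ω hΩopen f hfhom h hpos hC2 hhom q hqΩ hq1 hq2 heq φ hφ q₁ hq₁ u hu
end

section
/- Let V be a finite-dimensional real normed vector space, Ω ⊆ V an open cone, f : Ω → V positively homogeneous of degree −3 (f(c • x) = c⁻³ • f(x) for all c > 0), and h : Ω → ℝ a strictly positive, twice continuously differentiable function that is positively homogeneous of degree 1. Let q : ℝ → Ω be twice differentiable with q''(t) = f(q(t)) for all t, and set φ(t) = h(q(t)) and q₁(t) = φ(t)⁻¹ • q(t). Suppose σ : ℝ → ℝ is twice differentiable and satisfies σ'(τ) = φ(σ(τ))² for all τ, and define Q(τ) = q₁(σ(τ)). Then for all τ: h(Q(τ)) = 1 and Q''(τ) = f(Q(τ)) + λ(τ) • Q(τ),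 where λ(τ) = −φ(σ(τ))³ · φ''(σ(τ)). -/
/-!
Under the change of time `dt/dτ = φ²`, the velocity of `Q = (φ⁻¹ • q) ∘ σ` is
`(φ • q' - φ' • q) ∘ σ`: the factor `φ²` cancels the `φ⁻²` coming from the derivative of `φ⁻¹`.
The derivative of `φ • q' - φ' • q` is `φ • q'' - φ'' • q`, the `φ' • q'` terms cancelling, so
`Q'' = φ² • (φ • f q - φ'' • q) ∘ σ`. Homogeneity of degree `-3` turns `φ³ • f q` into
`f (φ⁻¹ • q) = f Q`, and what is left, `-φ² φ'' • q = -φ³ φ'' • Q`, is the radial reaction.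
Homogeneity of degree `1` of `h` gives `h Q = 1`.
-/

section Kinematics

variable {E : Type*} [NormedAddCommGroup E] [NormedSpace ℝ E]

theorem hasDerivAt_smul_deriv_sub_deriv_smul_s1 {φ : ℝ → ℝ} {q : ℝ → E} {t : ℝ}
    (hφ1 : DifferentiableAt ℝ φ t) (hφ2 : DifferentiableAt ℝ (deriv φ) t)
    (hq1 : DifferentiableAt ℝ q t) (hq2 : DifferentiableAt ℝ (deriv q) t) :
    HasDerivAt (fun t => φ t • deriv q t - deriv φ t • q t)
      (φ t • deriv (deriv q) t - deriv (deriv φ) t • q t) t := by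
  refine ((hφ1.hasDerivAt.smul hq2.hasDerivAt).sub
    (hφ2.hasDerivAt.smul hq1.hasDerivAt)).congr_deriv ?_
  abel

theorem hasDerivAt_inv_smul_comp {φ σ : ℝ → ℝ} {q : ℝ → E} {τ : ℝ}
    (hφ0 : φ (σ τ) ≠ 0) (hφ1 : DifferentiableAt ℝ φ (σ τ)) (hq1 : DifferentiableAt ℝ q (σ τ))
    (hσ : HasDerivAt σ (φ (σ τ) ^ 2) τ) :
    HasDerivAt (fun τ => (φ (σ τ))⁻¹ • q (σ τ))
      (φ (σ τ) • deriv q (σ τ) - deriv φ (σ τ) • q (σ τ)) τ := by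
  refine (((hφ1.hasDerivAt.inv hφ0).smul hq1.hasDerivAt).scomp τ hσ).congr_deriv ?_
  simp only [Pi.inv_apply]
  match_scalars <;> field_simp

theorem deriv_deriv_inv_smul_comp {φ σ : ℝ → ℝ} {q : ℝ → E}
    (hφ0 : ∀ t, φ t ≠ 0) (hφ1 : Differentiable ℝ φ) (hφ2 : Differentiable ℝ (deriv φ))
    (hq1 : Differentiable ℝ q) (hq2 : Differentiable ℝ (deriv q))
    (hσ : ∀ τ, HasDerivAt σ (φ (σ τ) ^ 2) τ) (τ : ℝ) :
    deriv (deriv fun τ => (φ (σ τ))⁻¹ • q (σ τ)) τ =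
      φ (σ τ) ^ 2 • (φ (σ τ) • deriv (deriv q) (σ τ) - deriv (deriv φ) (σ τ) • q (σ τ)) := by
  have hQ' : deriv (fun τ => (φ (σ τ))⁻¹ • q (σ τ)) =
      fun τ => φ (σ τ) • deriv q (σ τ) - deriv φ (σ τ) • q (σ τ) :=
    funext fun τ => (hasDerivAt_inv_smul_comp (hφ0 _) (hφ1 _) (hq1 _) (hσ τ)).deriv
  rw [hQ']
  exact ((hasDerivAt_smul_deriv_sub_deriv_smul_s1 (hφ1 _) (hφ2 _) (hq1 _) (hq2 _)).scomp τ
    (hσ τ)).deriv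

end Kinematics

theorem differentiable_deriv_comp_of_contDiffOn {V F : Type*} [NormedAddCommGroup V]
    [NormedSpace ℝ V] [NormedAddCommGroup F] [NormedSpace ℝ F] {Ω : Set V} {h : V → F}
    {q : ℝ → V} (hΩ : IsOpen Ω) (hh : ContDiffOn ℝ 2 h Ω) (hqΩ : ∀ t, q t ∈ Ω)
    (hq1 : Differentiable ℝ q) (hq2 : Differentiable ℝ (deriv q)) :
    Differentiable ℝ (h ∘ q) ∧ Differentiable ℝ (deriv (h ∘ q)) := by
  have hhq : ∀ t, ContDiffAt ℝ 2 h (q t) := fun t => hh.contDiffAt (hΩ.mem_nhds (hqΩ t))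
  have hderiv : deriv (h ∘ q) = fun t => fderiv ℝ h (q t) (deriv q t) :=
    funext fun t => (((hhq t).differentiableAt two_ne_zero).hasFDerivAt.comp_hasDerivAt t
      (hq1 t).hasDerivAt).deriv
  refine ⟨fun t => ((hhq t).differentiableAt two_ne_zero).comp t (hq1 t), ?_⟩
  rw [hderiv]
  exact fun t => ((((hhq t).fderiv_right le_rfl).differentiableAt one_ne_zero).comp t
    (hq1 t)).clm_apply (hq2 t)

theorem stmt_1_general
    {V : Type*} [NormedAddCommGroup V] [NormedSpace ℝ V]
    (Ω : Set V) (hΩopen : IsOpen Ω)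
    (f : V → V)
    (hfhom : ∀ c : ℝ, 0 < c → ∀ x ∈ Ω, f (c • x) = (c ^ 3)⁻¹ • f x)
    (h : V → ℝ)
    (hpos : ∀ x ∈ Ω, 0 < h x)
    (hC2 : ContDiffOn ℝ 2 h Ω)
    (hhom : ∀ c : ℝ, 0 < c → ∀ x ∈ Ω, h (c • x) = c * h x)
    (q : ℝ → V) (hqΩ : ∀ t, q t ∈ Ω)
    (hq1 : Differentiable ℝ q) (hq2 : Differentiable ℝ (deriv q))
    (heq : ∀ t, deriv (deriv q) t = f (q t))
    (φ : ℝ → ℝ) (hφ : ∀ t, φ t = h (q t))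
    (q₁ : ℝ → V) (hq₁ : ∀ t, q₁ t = (φ t)⁻¹ • q t)
    (σ : ℝ → ℝ) (hσ1 : Differentiable ℝ σ)
    (hσeq : ∀ τ, deriv σ τ = (φ (σ τ)) ^ 2)
    (Q : ℝ → V) (hQ : ∀ τ, Q τ = q₁ (σ τ))
    (lam : ℝ → ℝ) (hlam : ∀ τ, lam τ = -((φ (σ τ)) ^ 3 * deriv (deriv φ) (σ τ))) :
    ∀ τ : ℝ,
      h (Q τ) = 1 ∧
      deriv (deriv Q) τ = f (Q τ) + lam τ • Q τ := by
  have hφpos : ∀ t, 0 < φ t := fun t => hφ t ▸ hpos _ (hqΩ t)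
  obtain ⟨hφ1, hφ2⟩ : Differentiable ℝ φ ∧ Differentiable ℝ (deriv φ) := by
    rw [show φ = h ∘ q from funext hφ]
    exact differentiable_deriv_comp_of_contDiffOn hΩopen hC2 hqΩ hq1 hq2
  have hσ : ∀ τ, HasDerivAt σ (φ (σ τ) ^ 2) τ := fun τ => hσeq τ ▸ (hσ1 τ).hasDerivAt
  have hQfun : Q = fun τ => (φ (σ τ))⁻¹ • q (σ τ) := funext fun τ => by rw [hQ, hq₁]
  intro τ
  have hφinv := inv_pos.2 (hφpos (σ τ))
  constructor
  · rw [hQfun, hhom _ hφinv _ (hqΩ _), ← hφ, inv_mul_cancel₀ (hφpos _).ne']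
  · rw [hQfun, deriv_deriv_inv_smul_comp (fun t => (hφpos t).ne') hφ1 hφ2 hq1 hq2 hσ,
      heq, hlam, hfhom _ hφinv _ (hqΩ _)]
    have hφne := (hφpos (σ τ)).ne'
    match_scalars <;> field_simp

/-- **Proposition 1 of the paper.** For a force field `f` positively
homogeneous of degree `-3`, the central projection `q₁ = q/h(q)` of a solution of
`q'' = f(q)`, reparametrized by the change of time `dt/dτ = h(q)²`, stays on the
screen `{h = 1}` and solves `Q'' = f(Q) + λ • Q` with `λ = -φ³ φ''`. -/
theorem stmt_1
    {V : Type*} [NormedAddCommGroup V] [NormedSpace ℝ V] [FiniteDimensional ℝ V]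
    (Ω : Set V) (hΩopen : IsOpen Ω)
    (hΩcone : ∀ c : ℝ, 0 < c → ∀ x ∈ Ω, c • x ∈ Ω)
    (f : V → V)
    (hfhom : ∀ c : ℝ, 0 < c → ∀ x ∈ Ω, f (c • x) = (c ^ 3)⁻¹ • f x)
    (h : V → ℝ)
    (hpos : ∀ x ∈ Ω, 0 < h x)
    (hC2 : ContDiffOn ℝ 2 h Ω)
    (hhom : ∀ c : ℝ, 0 < c → ∀ x ∈ Ω, h (c • x) = c * h x)
    (q : ℝ → V) (hqΩ : ∀ t, q t ∈ Ω)
    (hq1 : Differentiable ℝ q) (hq2 : Differentiable ℝ (deriv q))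
    (heq : ∀ t, deriv (deriv q) t = f (q t))
    (φ : ℝ → ℝ) (hφ : ∀ t, φ t = h (q t))
    (q₁ : ℝ → V) (hq₁ : ∀ t, q₁ t = (φ t)⁻¹ • q t)
    (σ : ℝ → ℝ) (hσ1 : Differentiable ℝ σ) (hσ2 : Differentiable ℝ (deriv σ))
    (hσeq : ∀ τ, deriv σ τ = (φ (σ τ)) ^ 2)
    (Q : ℝ → V) (hQ : ∀ τ, Q τ = q₁ (σ τ))
    (lam : ℝ → ℝ) (hlam : ∀ τ, lam τ = -((φ (σ τ)) ^ 3 * deriv (deriv φ) (σ τ))) :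
    ∀ τ : ℝ,
      h (Q τ) = 1 ∧
      deriv (deriv Q) τ = f (Q τ) + lam τ • Q τ :=
  stmt_1_general Ω hΩopen f hfhom h hpos hC2 hhom q hqΩ hq1 hq2 heq φ hφ q₁ hq₁ σ hσ1 hσeq Q hQ lam
    hlam
end

section
/- Let V be a finite-dimensional real normed vector space, Ω ⊆ V an open cone, and h : Ω → ℝ a twice continuously differentiable function that is positively homogeneous of degree 1 (h(c • x) = c · h(x) for all c > 0 and x ∈ Ω). Let f : Ω → V be continuous, λ : ℝ → ℝ, and Q : ℝ → Ω twice differentiable with h(Q(τ)) = 1 and Q''(τ) = f(Q(τ)) + λ(τ) • Q(τ) for all τ. Then the multiplier is uniquely determined by the constraint: λ(τ) = −Dh(Q(τ))[f(Q(τ))] − D²h(Q(τ))[Q'(τ), Q'(τ)] for all τ, where Dh and D²h denote the first and second Fréchet derivatives of h. -/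
/-!
Differentiating the constraint `h (Q τ) = 1` twice along the trajectory gives
`D²h(Q)[Q', Q'] + Dh(Q)[Q''] = 0`. Substituting `Q'' = f(Q) + λ • Q` and using Euler's identity
`Dh(Q)[Q] = h(Q) = 1` isolates `λ`.
-/

open Topology

theorem HasDerivAt.eq_zero_of_forall_eq {F : Type*} [NormedAddCommGroup F] [NormedSpace ℝ F]
    {φ : ℝ → F} {φ' c : F} {t : ℝ} (hφ : HasDerivAt φ φ' t) (hc : ∀ s, φ s = c) : φ' = 0 := by
  rw [show φ = fun _ => c from funext hc] at hφ
  exact hφ.unique (hasDerivAt_const t c)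

theorem fderiv_apply_self_of_homogeneous {V : Type*} [NormedAddCommGroup V] [NormedSpace ℝ V]
    {h : V → ℝ} {x : V} (hhom : ∀ c : ℝ, 0 < c → h (c • x) = c * h x)
    (hdiff : DifferentiableAt ℝ h x) : fderiv ℝ h x x = h x := by
  have hray : HasDerivAt (fun c : ℝ => h (c • x)) (fderiv ℝ h x x) 1 := by
    have hsmul : HasDerivAt (fun c : ℝ => c • x) x 1 := by
      simpa using (hasDerivAt_id (1 : ℝ)).smul_const x
    exact hdiff.hasFDerivAt.comp_hasDerivAt_of_eq 1 hsmul (one_smul ℝ x).symm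
  have hlin : (fun c : ℝ => h (c • x)) =ᶠ[𝓝 1] fun c => c * h x := by
    filter_upwards [lt_mem_nhds one_pos] with c hc using hhom c hc
  exact (hray.congr_of_eventuallyEq hlin.symm).unique (by simpa using (hasDerivAt_mul_const (h x)))

theorem stmt_2_general
    {V : Type*} [NormedAddCommGroup V] [NormedSpace ℝ V]
    (Ω : Set V) (hΩopen : IsOpen Ω)
    (h : V → ℝ)
    (hC2 : ContDiffOn ℝ 2 h Ω)
    (hhom : ∀ c : ℝ, 0 < c → ∀ x ∈ Ω, h (c • x) = c * h x)
    (f : V → V)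
    (lam : ℝ → ℝ)
    (Q : ℝ → V) (hQΩ : ∀ τ, Q τ ∈ Ω)
    (hQ1 : Differentiable ℝ Q) (hQ2 : Differentiable ℝ (deriv Q))
    (hcon : ∀ τ, h (Q τ) = 1)
    (heq : ∀ τ, deriv (deriv Q) τ = f (Q τ) + lam τ • Q τ) :
    ∀ τ : ℝ,
      lam τ = -(fderiv ℝ h (Q τ) (f (Q τ)))
        - (fderiv ℝ (fderiv ℝ h) (Q τ) (deriv Q τ)) (deriv Q τ) := by
  have hC2at : ∀ s, ContDiffAt ℝ 2 h (Q s) := fun s => hC2.contDiffAt (hΩopen.mem_nhds (hQΩ s))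
  have hfirst : ∀ s, fderiv ℝ h (Q s) (deriv Q s) = 0 := fun s =>
    (((hC2at s).differentiableAt two_ne_zero).hasFDerivAt.comp_hasDerivAt s
      (hQ1 s).hasDerivAt).eq_zero_of_forall_eq hcon
  intro τ
  have hsecond : fderiv ℝ (fderiv ℝ h) (Q τ) (deriv Q τ) (deriv Q τ)
      + fderiv ℝ h (Q τ) (deriv (deriv Q) τ) = 0 :=
    ((((hC2at τ).fderiv_right (m := 1) le_rfl).differentiableAt one_ne_zero).hasFDerivAt
      |>.comp_hasDerivAt τ (hQ1 τ).hasDerivAt |>.clm_apply (hQ2 τ).hasDerivAt).eq_zero_of_forall_eq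
      hfirst
  have heuler : fderiv ℝ h (Q τ) (Q τ) = 1 :=
    (fderiv_apply_self_of_homogeneous (fun c hc => hhom c hc _ (hQΩ τ))
      ((hC2at τ).differentiableAt two_ne_zero)).trans (hcon τ)
  rw [heq τ, map_add, map_smul, heuler, smul_eq_mul, mul_one] at hsecond
  linarith

/-- In the constrained system `Q'' = f(Q) + λ • Q` on the screen
`{h = 1}` (with `h` positively homogeneous of degree 1 and `C²`), the multiplier is
uniquely determined by the constraint:
`λ = -Dh(Q)[f(Q)] - D²h(Q)[Q', Q']`. -/
theorem stmt_2
    {V : Type*} [NormedAddCommGroup V] [NormedSpace ℝ V] [FiniteDimensional ℝ V]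
    (Ω : Set V) (hΩopen : IsOpen Ω)
    (hΩcone : ∀ c : ℝ, 0 < c → ∀ x ∈ Ω, c • x ∈ Ω)
    (h : V → ℝ)
    (hC2 : ContDiffOn ℝ 2 h Ω)
    (hhom : ∀ c : ℝ, 0 < c → ∀ x ∈ Ω, h (c • x) = c * h x)
    (f : V → V) (hfcont : ContinuousOn f Ω)
    (lam : ℝ → ℝ)
    (Q : ℝ → V) (hQΩ : ∀ τ, Q τ ∈ Ω)
    (hQ1 : Differentiable ℝ Q) (hQ2 : Differentiable ℝ (deriv Q))
    (hcon : ∀ τ, h (Q τ) = 1)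
    (heq : ∀ τ, deriv (deriv Q) τ = f (Q τ) + lam τ • Q τ) :
    ∀ τ : ℝ,
      lam τ = -(fderiv ℝ h (Q τ) (f (Q τ)))
        - (fderiv ℝ (fderiv ℝ h) (Q τ) (deriv Q τ)) (deriv Q τ) :=
  stmt_2_general Ω hΩopen h hC2 hhom f lam Q hQΩ hQ1 hQ2 hcon heq
end

section
/- Let V be a real inner product space, U : V ∖ {0} → ℝ a differentiable function that is positively homogeneous of degree −2 (U(c • x) = c⁻² · U(x) for all c > 0 and x ≠ 0), and let ∇U denote its gradient with respect to the inner product. Let λ : ℝ → ℝ and let q : ℝ → V be twice differentiable with ⟪q(t), q(t)⟫ = 1 and q''(t) = ∇U(q(t)) + λ(t) • q(t) for all t. Then for all t: λ(t) = −2 · ((1/2) · ⟪q'(t), q'(t)⟫ − U(q(t))), i.e. the multiplier λ equals minus twice the energy (1/2)‖q'‖² − U(q). -/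
/-!
Differentiating `⟪q, q⟫ = 1` twice gives `⟪q'', q⟫ = -⟪q', q'⟫`. Pairing the equation of motion
with `q` and using Euler's identity `⟪∇U(q), q⟫ = -2 U(q)` gives `⟪q'', q⟫ = -2 U(q) + λ`.
-/

open scoped RealInnerProductSpace

section

variable {V : Type*} [NormedAddCommGroup V] [InnerProductSpace ℝ V]

theorem fderiv_apply_self_of_rpow_homogeneous {U : V → ℝ} {x : V} {k : ℝ}
    (hU : DifferentiableAt ℝ U x) (hhom : ∀ c : ℝ, 0 < c → U (c • x) = c ^ k * U x) :
    fderiv ℝ U x x = k * U x := by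
  have hline : HasDerivAt (fun c : ℝ => U (c • x)) (fderiv ℝ U x x) 1 := by
    have hsmul : HasDerivAt (fun c : ℝ => c • x) x 1 := by
      simpa using (hasDerivAt_id (1 : ℝ)).smul_const x
    have hU' : HasFDerivAt U (fderiv ℝ U x) ((1 : ℝ) • x) := by
      rw [one_smul]
      exact hU.hasFDerivAt
    exact hU'.comp_hasDerivAt 1 hsmul
  have hpow : HasDerivAt (fun c : ℝ => c ^ k * U x) (k * U x) 1 := by
    simpa using (Real.hasDerivAt_rpow_const (x := 1) (p := k) (Or.inl one_ne_zero)).mul_const (U x)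
  have hnear : (fun c : ℝ => U (c • x)) =ᶠ[nhds 1] fun c => c ^ k * U x := by
    filter_upwards [eventually_gt_nhds one_pos] with c hc
    exact hhom c hc
  exact hline.unique (hpow.congr_of_eventuallyEq hnear)

theorem inner_deriv_add_inner_deriv_eq_zero_of_inner_const {f g : ℝ → V} {r t : ℝ}
    (hf : DifferentiableAt ℝ f t) (hg : DifferentiableAt ℝ g t) (hc : ∀ s, ⟪f s, g s⟫ = r) :
    ⟪f t, deriv g t⟫ + ⟪deriv f t, g t⟫ = 0 := by
  have hconst : HasDerivAt (fun s => ⟪f s, g s⟫) 0 t := by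
    simpa [funext hc] using hasDerivAt_const t r
  exact (hf.hasDerivAt.inner ℝ hg.hasDerivAt).unique hconst

end

/-- **Proposition 2 of the paper.** For a potential `U` positively
homogeneous of degree `-2` on `V \ {0}`, a motion on the unit sphere satisfying
`q'' = ∇U(q) + λ • q` has multiplier equal to minus twice the energy:
`λ = -2 ((1/2)‖q'‖² - U(q))`. -/
theorem stmt_4
    {V : Type*} [NormedAddCommGroup V] [InnerProductSpace ℝ V]
    (U : V → ℝ)
    (hUdiff : ∀ x : V, x ≠ 0 → DifferentiableAt ℝ U x)
    (hUhom : ∀ c : ℝ, 0 < c → ∀ x : V, x ≠ 0 → U (c • x) = (c ^ 2)⁻¹ * U x)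
    (gradU : V → V)
    (hgrad : ∀ x : V, x ≠ 0 → ∀ v : V, ⟪gradU x, v⟫ = fderiv ℝ U x v)
    (lam : ℝ → ℝ)
    (q : ℝ → V)
    (hq1 : Differentiable ℝ q) (hq2 : Differentiable ℝ (deriv q))
    (hcon : ∀ t, ⟪q t, q t⟫ = (1 : ℝ))
    (heq : ∀ t, deriv (deriv q) t = gradU (q t) + lam t • q t) :
    ∀ t : ℝ,
      lam t = -2 * ((1 / 2) * ⟪deriv q t, deriv q t⟫ - U (q t)) := by
  have hvel : ∀ t, ⟪deriv q t, q t⟫ = 0 := fun t => by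
    have := inner_deriv_add_inner_deriv_eq_zero_of_inner_const (hq1 t) (hq1 t) hcon
    rw [real_inner_comm] at this
    linarith
  intro t
  have hq0 : q t ≠ 0 := fun h => by simpa [h] using hcon t
  have heuler : ⟪gradU (q t), q t⟫ = -2 * U (q t) := by
    rw [hgrad _ hq0]
    refine fderiv_apply_self_of_rpow_homogeneous (hUdiff _ hq0) fun c hc => ?_
    rw [hUhom c hc _ hq0, Real.rpow_neg hc.le, Real.rpow_two]
  have hacc := inner_deriv_add_inner_deriv_eq_zero_of_inner_const (hq2 t) (hq1 t) hvel
  rw [heq, inner_add_left, heuler, real_inner_smul_left, hcon] at hacc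
  linarith
end

section
/- Let V be a real inner product space, U : V ∖ {0} → ℝ a continuously differentiable function that is positively homogeneous of degree −2 (U(c • x) = c⁻² · U(x) for all c > 0, x ≠ 0), with gradient ∇U with respect to the inner product. Let λ : ℝ → ℝ and q : ℝ → V be twice differentiable with ⟪q(t), q(t)⟫ = 1 and q''(t) = ∇U(q(t)) + λ(t) • q(t) for all t. Then the energy E(t) = (1/2) · ⟪q'(t), q'(t)⟫ − U(q(t)) is constant in t, and consequently the multiplier λ is constant in t. -/
/-!
On the unit sphere `⟪q, q'⟫ = 0`, so the reaction force `λ • q` does no work and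
`E' = ⟪q', ∇U(q)⟫ - dU(q) q' = 0`. Differentiating `⟪q, q'⟫ = 0` once more gives
`⟪q, q''⟫ + ‖q'‖² = 0`, and Euler's identity `dU(q) q = -2 U(q)` turns
`⟪q, q''⟫ = ⟪∇U(q), q⟫ + λ` into `λ = -2E`.
-/

open scoped RealInnerProductSpace

section Homogeneous

variable {E : Type*} [NormedAddCommGroup E] [NormedSpace ℝ E]

theorem fderiv_apply_self_of_homogeneous_s6 {U : E → ℝ} {x : E} {n : ℤ}
    (hU : DifferentiableAt ℝ U x) (hhom : ∀ c : ℝ, 0 < c → U (c • x) = c ^ n * U x) :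
    fderiv ℝ U x x = n * U x := by
  have hline : HasDerivAt (fun c : ℝ => c • x) x 1 := by
    simpa using (hasDerivAt_id (1 : ℝ)).smul_const x
  have hleft : HasDerivAt (fun c : ℝ => U (c • x)) (fderiv ℝ U x x) 1 := by
    rw [← one_smul ℝ x] at hU
    simpa [Function.comp_def] using hU.hasFDerivAt.comp_hasDerivAt 1 hline
  have hright : HasDerivAt (fun c : ℝ => c ^ n * U x) (n * U x) 1 := by
    simpa using (hasDerivAt_zpow n (1 : ℝ) (Or.inl one_ne_zero)).mul_const (U x)
  refine hleft.unique (hright.congr_of_eventuallyEq ?_)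
  filter_upwards [eventually_gt_nhds one_pos] with c hc
  exact hhom c hc

end Homogeneous

section Sphere

variable {V : Type*} [NormedAddCommGroup V] [InnerProductSpace ℝ V] {q : ℝ → V} {r : ℝ}

theorem inner_deriv_eq_zero_of_forall_inner_self_eq (hq : Differentiable ℝ q)
    (hr : ∀ t, ⟪q t, q t⟫ = r) (t : ℝ) : ⟪q t, deriv q t⟫ = 0 := by
  have h := (hq t).hasDerivAt.inner ℝ (hq t).hasDerivAt
  rw [show (fun t => ⟪q t, q t⟫) = fun _ => r from funext hr] at h
  linarith [h.unique (hasDerivAt_const t r), real_inner_comm (q t) (deriv q t)]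

theorem inner_deriv_deriv_add_inner_deriv_self_eq_zero (hq : Differentiable ℝ q)
    (hq' : Differentiable ℝ (deriv q)) (hr : ∀ t, ⟪q t, q t⟫ = r) (t : ℝ) :
    ⟪q t, deriv (deriv q) t⟫ + ⟪deriv q t, deriv q t⟫ = 0 := by
  have h := (hq t).hasDerivAt.inner ℝ (hq' t).hasDerivAt
  rw [show (fun t => ⟪q t, deriv q t⟫) = fun _ => 0 from
    funext (inner_deriv_eq_zero_of_forall_inner_self_eq hq hr)] at h
  rw [h.unique (hasDerivAt_const t 0)]

end Sphere

section Energy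

variable {V : Type*} [NormedAddCommGroup V] [InnerProductSpace ℝ V]
  {U : V → ℝ} {q : ℝ → V} {g : V} {μ t : ℝ}

noncomputable def energy (U : V → ℝ) (q : ℝ → V) (t : ℝ) : ℝ :=
  1 / 2 * ⟪deriv q t, deriv q t⟫ - U (q t)

theorem hasDerivAt_energy_zero (hU : DifferentiableAt ℝ U (q t))
    (hg : ∀ v, ⟪g, v⟫ = fderiv ℝ U (q t) v) (hq : DifferentiableAt ℝ q t)
    (hq' : DifferentiableAt ℝ (deriv q) t) (horth : ⟪q t, deriv q t⟫ = 0)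
    (heq : deriv (deriv q) t = g + μ • q t) :
    HasDerivAt (energy U q) 0 t := by
  have hkin := hq'.hasDerivAt.inner ℝ hq'.hasDerivAt
  have hpot := hU.hasFDerivAt.comp_hasDerivAt t hq.hasDerivAt
  refine ((hkin.const_mul (1 / 2 : ℝ)).sub hpot).congr_deriv ?_
  rw [← hg, heq, inner_add_left, inner_add_right, real_inner_smul_left,
    real_inner_smul_right, real_inner_comm (q t), horth, real_inner_comm g]
  ring

theorem eq_neg_two_mul_energy (hq : Differentiable ℝ q) (hq' : Differentiable ℝ (deriv q))
    (hcon : ∀ t, ⟪q t, q t⟫ = 1) (hg : ⟪g, q t⟫ = -2 * U (q t))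
    (heq : deriv (deriv q) t = g + μ • q t) :
    μ = -2 * energy U q t := by
  have h := inner_deriv_deriv_add_inner_deriv_self_eq_zero hq hq' hcon t
  rw [heq, inner_add_right, real_inner_smul_right, hcon t, real_inner_comm, hg] at h
  unfold energy
  linarith

end Energy

/-- For a `C¹` potential `U` positively homogeneous of degree `-2`
on `V \ {0}`, along a motion on the unit sphere with `q'' = ∇U(q) + λ • q`,
the energy `E = (1/2)⟪q', q'⟫ - U(q)` is constant, and consequently the
multiplier `λ` is constant. -/
theorem stmt_6
    {V : Type*} [NormedAddCommGroup V] [InnerProductSpace ℝ V]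
    (U : V → ℝ)
    (hUC1 : ContDiffOn ℝ 1 U {(0 : V)}ᶜ)
    (hUhom : ∀ c : ℝ, 0 < c → ∀ x : V, x ≠ 0 → U (c • x) = (c ^ 2)⁻¹ * U x)
    (gradU : V → V)
    (hgrad : ∀ x : V, x ≠ 0 → ∀ v : V, ⟪gradU x, v⟫ = fderiv ℝ U x v)
    (lam : ℝ → ℝ)
    (q : ℝ → V)
    (hq1 : Differentiable ℝ q) (hq2 : Differentiable ℝ (deriv q))
    (hcon : ∀ t, ⟪q t, q t⟫ = (1 : ℝ))
    (heq : ∀ t, deriv (deriv q) t = gradU (q t) + lam t • q t) :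
    ∀ t s : ℝ,
      ((1 / 2) * ⟪deriv q t, deriv q t⟫ - U (q t)
        = (1 / 2) * ⟪deriv q s, deriv q s⟫ - U (q s)) ∧
      lam t = lam s := by
  have hne : ∀ t, q t ≠ 0 := fun t h => by simpa [h] using hcon t
  have hUdiff : ∀ t, DifferentiableAt ℝ U (q t) := fun t =>
    (hUC1.contDiffAt (isOpen_compl_singleton.mem_nhds (hne t))).differentiableAt one_ne_zero
  have hE' : ∀ t, HasDerivAt (energy U q) 0 t := fun t =>
    hasDerivAt_energy_zero (hUdiff t) (hgrad _ (hne t)) (hq1 t) (hq2 t)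
      (inner_deriv_eq_zero_of_forall_inner_self_eq hq1 hcon t) (heq t)
  have hE : ∀ t s, energy U q t = energy U q s :=
    is_const_of_deriv_eq_zero (fun t => (hE' t).differentiableAt) (fun t => (hE' t).deriv)
  have hlam : ∀ t, lam t = -2 * energy U q t := fun t => by
    have heuler := fderiv_apply_self_of_homogeneous_s6 (n := -2) (hUdiff t) fun c hc => by
      rw [hUhom c hc _ (hne t), zpow_neg, zpow_ofNat]
    refine eq_neg_two_mul_energy hq1 hq2 hcon ?_ (heq t)
    rw [hgrad _ (hne t), heuler]
    norm_num
  exact fun t s => ⟨hE t s, by rw [hlam t, hlam s, hE t s]⟩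
end

section
/- Let V be a finite-dimensional real normed vector space, Ω ⊆ V an open cone, and f : Ω → V a differentiable map that is positively homogeneous of degree −3 (f(c • x) = c⁻³ • f(x) for all c > 0). On the phase space Ω × V define the vector fields X(q, p) = (p, f(q)), Y(q, p) = (q, −p), Z(q, p) = (0, q), and for differentiable vector fields A, B on Ω × V define the Lie bracket pointwise by [A, B](x) = DB(x)[A(x)] − DA(x)[B(x)], where D denotes the Fréchet derivative. Then at every point of Ω × V: [X, Y] = 2 • X, [Y, Z] = 2 • Z, and [Z, X] = Y. -/
/-! `Y` and `Z` are linear, so they are their own derivatives and the brackets are bilinear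
bookkeeping. The one nonlinear term is `Df(q)[q]` in `[X, Y]`; Euler's identity turns it into
`-3 • f q`, so the second component of `[X, Y]` is `-f q + 3 • f q = 2 • f q`. -/

section

open ContinuousLinearMap

variable {E F : Type*} [NormedAddCommGroup E] [NormedSpace ℝ E]
  [NormedAddCommGroup F] [NormedSpace ℝ F]

/-- Euler's identity: differentiate `c ↦ f (c • q) = (c ^ n)⁻¹ • f q` at `c = 1`. -/
theorem fderiv_apply_self_of_map_smul_eq_inv_pow_smul {f : E → F} {q : E} (n : ℕ)
    (hf : DifferentiableAt ℝ f q)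
    (hhom : ∀ c : ℝ, 0 < c → f (c • q) = (c ^ n)⁻¹ • f q) :
    fderiv ℝ f q q = -(n : ℝ) • f q := by
  have hray : HasDerivAt (fun c : ℝ => f (c • q)) (fderiv ℝ f q q) 1 := by
    have hline : HasDerivAt (fun c : ℝ => c • q) q 1 := by
      simpa using (hasDerivAt_id (1 : ℝ)).smul_const q
    exact hf.hasFDerivAt.comp_hasDerivAt_of_eq 1 hline (one_smul ℝ q).symm
  have hpow : HasDerivAt (fun c : ℝ => (c ^ n)⁻¹ • f q) (-(n : ℝ) • f q) 1 := by
    have := (hasDerivAt_pow n (1 : ℝ)).inv (by norm_num)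
    simpa using this.smul_const (f q)
  have hon : (fun c : ℝ => f (c • q)) =ᶠ[nhds 1] fun c => (c ^ n)⁻¹ • f q :=
    (lt_mem_nhds one_pos).mono hhom
  exact hray.unique (hpow.congr_of_eventuallyEq hon)

theorem fderiv_snd_prodMk_comp_fst_apply {f : E → E} {qp : E × E}
    (hf : DifferentiableAt ℝ f qp.1) (v : E × E) :
    fderiv ℝ (fun x : E × E => (x.2, f x.1)) qp v = (v.2, fderiv ℝ f qp.1 v.1) := by
  have h : HasFDerivAt (fun x : E × E => (x.2, f x.1))
      ((snd ℝ E E).prod ((fderiv ℝ f qp.1).comp (fst ℝ E E))) qp :=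
    hasFDerivAt_snd.prodMk (hf.hasFDerivAt.comp qp hasFDerivAt_fst)
  rw [h.fderiv]
  rfl

theorem fderiv_fst_prodMk_neg_snd_apply (qp v : E × E) :
    fderiv ℝ (fun x : E × E => (x.1, -x.2)) qp v = (v.1, -v.2) := by
  have h : HasFDerivAt (fun x : E × E => (x.1, -x.2)) ((fst ℝ E E).prod (-snd ℝ E E)) qp :=
    hasFDerivAt_fst.prodMk hasFDerivAt_snd.neg
  rw [h.fderiv]
  rfl

theorem fderiv_zero_prodMk_fst_apply (qp v : E × E) :
    fderiv ℝ (fun x : E × E => ((0 : E), x.1)) qp v = (0, v.1) := by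
  have h : HasFDerivAt (fun x : E × E => ((0 : E), x.1))
      ((0 : E × E →L[ℝ] E).prod (fst ℝ E E)) qp :=
    (hasFDerivAt_const (0 : E) qp).prodMk hasFDerivAt_fst
  rw [h.fderiv]
  rfl

end

theorem stmt_7_general
    {V : Type*} [NormedAddCommGroup V] [NormedSpace ℝ V]
    (Ω : Set V)
    (f : V → V)
    (hfdiff : ∀ x ∈ Ω, DifferentiableAt ℝ f x)
    (hfhom : ∀ c : ℝ, 0 < c → ∀ x ∈ Ω, f (c • x) = (c ^ 3)⁻¹ • f x)
    (X Y Z : V × V → V × V)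
    (hX : ∀ qp : V × V, X qp = (qp.2, f qp.1))
    (hY : ∀ qp : V × V, Y qp = (qp.1, -qp.2))
    (hZ : ∀ qp : V × V, Z qp = ((0 : V), qp.1))
    (bracket : (V × V → V × V) → (V × V → V × V) → (V × V → V × V))
    (hbracket : ∀ (A B : V × V → V × V) (x : V × V),
      bracket A B x = fderiv ℝ B x (A x) - fderiv ℝ A x (B x)) :
    ∀ qp : V × V, qp.1 ∈ Ω →
      bracket X Y qp = (2 : ℝ) • X qp ∧
      bracket Y Z qp = (2 : ℝ) • Z qp ∧
      bracket Z X qp = Y qp := by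
  intro qp hq
  obtain rfl : X = fun x => (x.2, f x.1) := funext hX
  obtain rfl : Y = fun x => (x.1, -x.2) := funext hY
  obtain rfl : Z = fun x => ((0 : V), x.1) := funext hZ
  have heuler : fderiv ℝ f qp.1 qp.1 = -(3 : ℝ) • f qp.1 := by
    exact_mod_cast fderiv_apply_self_of_map_smul_eq_inv_pow_smul 3 (hfdiff _ hq)
      fun c hc => hfhom c hc _ hq
  simp only [hbracket, fderiv_snd_prodMk_comp_fst_apply (hfdiff _ hq),
    fderiv_fst_prodMk_neg_snd_apply, fderiv_zero_prodMk_fst_apply, heuler, map_zero,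
    Prod.smul_mk, Prod.mk_sub_mk, Prod.mk.injEq]
  refine ⟨⟨?_, ?_⟩, ⟨?_, ?_⟩, ⟨?_, ?_⟩⟩ <;> module

/-- On the phase space `Ω × V` of `q'' = f(q)`, with `f`
differentiable and positively homogeneous of degree `-3`, the vector fields
`X(q,p) = (p, f(q))`, `Y(q,p) = (q, -p)`, `Z(q,p) = (0, q)` satisfy the
`sl₂` bracket relations `[X,Y] = 2X`, `[Y,Z] = 2Z`, `[Z,X] = Y`, where
`[A,B](x) = DB(x)[A(x)] - DA(x)[B(x)]`. -/
theorem stmt_7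
    {V : Type*} [NormedAddCommGroup V] [NormedSpace ℝ V] [FiniteDimensional ℝ V]
    (Ω : Set V) (hΩopen : IsOpen Ω)
    (hΩcone : ∀ c : ℝ, 0 < c → ∀ x ∈ Ω, c • x ∈ Ω)
    (f : V → V)
    (hfdiff : ∀ x ∈ Ω, DifferentiableAt ℝ f x)
    (hfhom : ∀ c : ℝ, 0 < c → ∀ x ∈ Ω, f (c • x) = (c ^ 3)⁻¹ • f x)
    (X Y Z : V × V → V × V)
    (hX : ∀ qp : V × V, X qp = (qp.2, f qp.1))
    (hY : ∀ qp : V × V, Y qp = (qp.1, -qp.2))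
    (hZ : ∀ qp : V × V, Z qp = ((0 : V), qp.1))
    (bracket : (V × V → V × V) → (V × V → V × V) → (V × V → V × V))
    (hbracket : ∀ (A B : V × V → V × V) (x : V × V),
      bracket A B x = fderiv ℝ B x (A x) - fderiv ℝ A x (B x)) :
    ∀ qp : V × V, qp.1 ∈ Ω →
      bracket X Y qp = (2 : ℝ) • X qp ∧
      bracket Y Z qp = (2 : ℝ) • Z qp ∧
      bracket Z X qp = Y qp :=
  stmt_7_general Ω f hfdiff hfhom X Y Z hX hY hZ bracket hbracket
end

section
/- Let V be a real inner product space and M : V →L[ℝ] V a continuous linear map that is symmetric with respect to the inner product (⟪M x, y⟫ = ⟪x, M y⟫ for all x, y). Let ν be a real constant, μ : ℝ → ℝ, and Q : ℝ → V twice differentiable with ⟪M Q(t), Q(t)⟫ = 1, M Q(t) ≠ 0, and Q''(t) = μ(t) • M Q(t) + ν • Q(t) for all t. Fix t₀ and set η = μ(t₀) · ⟪M Q(t₀), M Q(t₀)⟫², and suppose μ(t) · ⟪M Q(t), M Q(t)⟫² = η for all t. Then the curve q(t) = M Q(t) is twice differentiable and satisfies, for all t: q''(t) = (η / ⟪q(t),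 q(t)⟫²) • M q(t) + ν • q(t). -/
/-! Differentiating the linear image twice gives `q'' = M Q'' = μ • M q + ν • q`, and Joachimsthal's
integral `μ ⟪q, q⟫² = η` (with `q ≠ 0`) turns the coefficient `μ` into `η / ⟪q, q⟫²`. -/

open scoped RealInnerProductSpace

section

variable {𝕜 E F : Type*} [NontriviallyNormedField 𝕜] [NormedAddCommGroup E] [NormedSpace 𝕜 E]
  [NormedAddCommGroup F] [NormedSpace 𝕜 F] (L : E →L[𝕜] F) {f : 𝕜 → E}

theorem ContinuousLinearMap.deriv_comp_apply (hf : Differentiable 𝕜 f) :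
    deriv (fun t => L (f t)) = fun t => L (deriv f t) :=
  funext fun t => (L.hasFDerivAt.comp_hasDerivAt t (hf t).hasDerivAt).deriv

theorem ContinuousLinearMap.differentiable_deriv_comp_apply (hf : Differentiable 𝕜 f)
    (hf' : Differentiable 𝕜 (deriv f)) : Differentiable 𝕜 (deriv fun t => L (f t)) := by
  rw [L.deriv_comp_apply hf]
  exact L.differentiable.comp hf'

theorem ContinuousLinearMap.deriv_deriv_comp_apply (hf : Differentiable 𝕜 f)
    (hf' : Differentiable 𝕜 (deriv f)) :
    deriv (deriv fun t => L (f t)) = fun t => L (deriv (deriv f) t) := by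
  rw [L.deriv_comp_apply hf, L.deriv_comp_apply hf']

end

theorem stmt_10_general
    {V : Type*} [NormedAddCommGroup V] [InnerProductSpace ℝ V]
    (M : V →L[ℝ] V)
    (ν : ℝ) (μ : ℝ → ℝ)
    (Q : ℝ → V)
    (hQ1 : Differentiable ℝ Q) (hQ2 : Differentiable ℝ (deriv Q))
    (hne : ∀ t, M (Q t) ≠ 0)
    (heq : ∀ t, deriv (deriv Q) t = μ t • M (Q t) + ν • Q t)
    (η : ℝ)
    (hη : ∀ t, μ t * (⟪M (Q t), M (Q t)⟫ : ℝ) ^ 2 = η)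
    (q : ℝ → V) (hq : ∀ t, q t = M (Q t)) :
    Differentiable ℝ q ∧ Differentiable ℝ (deriv q) ∧
    ∀ t : ℝ,
      deriv (deriv q) t = (η / (⟪q t, q t⟫ : ℝ) ^ 2) • M (q t) + ν • q t := by
  obtain rfl : q = fun t => M (Q t) := funext hq
  refine ⟨M.differentiable.comp hQ1, M.differentiable_deriv_comp_apply hQ1 hQ2, fun t => ?_⟩
  have hμ : μ t = η / ⟪M (Q t), M (Q t)⟫ ^ 2 :=
    (eq_div_iff (pow_ne_zero 2 (inner_self_ne_zero.2 (hne t)))).2 (hη t)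
  rw [M.deriv_deriv_comp_apply hQ1 hQ2]
  dsimp only
  rw [heq t, map_add, map_smul, map_smul, hμ]

/-- In the Jacobi problem `Q'' = μ • M Q + ν • Q` on the
ellipsoid `{⟪M Q, Q⟫ = 1}` with `M` symmetric and Joachimsthal constant
`η = μ ⟪M Q, M Q⟫²`, the image curve `q = M Q` is twice differentiable and
solves the intermediate problem `q'' = (η / ⟪q, q⟫²) • M q + ν • q`. -/
theorem stmt_10
    {V : Type*} [NormedAddCommGroup V] [InnerProductSpace ℝ V]
    (M : V →L[ℝ] V)
    (hM : ∀ x y : V, ⟪M x, y⟫ = ⟪x, M y⟫)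
    (ν : ℝ) (μ : ℝ → ℝ)
    (Q : ℝ → V)
    (hQ1 : Differentiable ℝ Q) (hQ2 : Differentiable ℝ (deriv Q))
    (hcon : ∀ t, ⟪M (Q t), Q t⟫ = (1 : ℝ))
    (hne : ∀ t, M (Q t) ≠ 0)
    (heq : ∀ t, deriv (deriv Q) t = μ t • M (Q t) + ν • Q t)
    (t₀ : ℝ) (η : ℝ) (hη₀ : η = μ t₀ * (⟪M (Q t₀), M (Q t₀)⟫ : ℝ) ^ 2)
    (hη : ∀ t, μ t * (⟪M (Q t), M (Q t)⟫ : ℝ) ^ 2 = η)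
    (q : ℝ → V) (hq : ∀ t, q t = M (Q t)) :
    Differentiable ℝ q ∧ Differentiable ℝ (deriv q) ∧
    ∀ t : ℝ,
      deriv (deriv q) t = (η / (⟪q t, q t⟫ : ℝ) ^ 2) • M (q t) + ν • q t :=
  stmt_10_general M ν μ Q hQ1 hQ2 hne heq η hη q hq
end
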